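/- The Tribonacci word TR, the fixed point of the morphism 0 → 01, 1 → 02, 2 → 0 starting with 0, satisfies: TR[n] = 0 if the Tribonacci representation of n ends in 0, TR[n] = 1 if it ends in 01, and TR[n] = 2 if it ends in 11. -/
import Mathlib


/-- Tribonacci numbers: T 0 = 0, T 1 = 1, T 2 = 1, T (n+3) = T (n+2) + T (n+1) + T n. -/
def T : ℕ → ℕ
  | 0 => 0
  | 1 => 1
  | 2 => 1
  | n + 3 => T (n + 2) + T (n + 1) + T n

/-- The Tribonacci morphism on letters: 0 ↦ 01, 1 ↦ 02, 2 ↦ 0. -/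
def σm : ℕ → List ℕ
  | 0 => [0, 1]
  | 1 => [0, 2]
  | _ => [0]

/-- The Tribonacci morphism extended to words by concatenation. -/
def σw : List ℕ → List ℕ
  | [] => []
  | a :: t => σm a ++ σw t

/-- The Tribonacci word, the fixed point of σ beginning with 0
(σ^[n+1] [0] has length > n and each σ^[m] [0] is a prefix of the next). -/
def TR (n : ℕ) : ℕ := ((σw^[n + 1]) [0]).getD n 0

/-- Number of occurrences of the letter `a` in the factor TR[i..i+n-1]. -/
def occ (a i n : ℕ) : ℕ := ((Finset.range n).filter (fun j => TR (i + j) = a)).card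

/-- Parikh vector of the factor TR[i..i+n-1], as an element of ℤ³. -/
def ψv (i n : ℕ) : ℤ × ℤ × ℤ := ((occ 0 i n : ℤ), (occ 1 i n : ℤ), (occ 2 i n : ℤ))

/-- Relative Parikh vector f(i,n) = ψ(TR[i..i+n-1]) − ψ(TR[0..n-1]). -/
def frel (i n : ℕ) : ℤ × ℤ × ℤ := ψv i n - ψv 0 n

/-- The set A_n of relative Parikh vectors. -/
def Aset (n : ℕ) : Set (ℤ × ℤ × ℤ) := {v | ∃ i, frel i n = v}

/-- Abelian complexity of TR: the number of distinct Parikh vectors of length-n factors. -/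
noncomputable def ρab (n : ℕ) : ℕ := (Aset n).ncard

/-- Value of a binary word e₁ ⋯ e_r in the Tribonacci numeration system:
[w]_T = Σ_{1 ≤ i ≤ r} e_i T_{r+2-i}.  (Index 0 of the list is e₁.) -/
def valT (w : List ℕ) : ℕ := ∑ i ∈ Finset.range w.length, w.getD i 0 * T (w.length + 1 - i)

/-- `w` is a valid Tribonacci representation: a binary word beginning with 1
and containing no factor 111. -/
def GoodRep (w : List ℕ) : Prop :=
  w.head? = some 1 ∧ (∀ d ∈ w, d ≤ 1) ∧ ¬ ([1, 1, 1] <:+: w)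

/-- The last digit of a word, with the convention that it is 0 for the empty word. -/
def lastDigit (w : List ℕ) : ℕ := w.getD (w.length - 1) 0

-- auxiliary development
def Aw (k : ℕ) : List ℕ := σw^[k] [0]
def Bw (k : ℕ) : List ℕ := σw^[k] [1]
def Cw (k : ℕ) : List ℕ := σw^[k] [2]

lemma σw_append (u v : List ℕ) : σw (u ++ v) = σw u ++ σw v := by
  induction u with
  | nil => simp [σw]
  | cons a t ih => simp [σw, ih]

lemma σw_iter_append (k : ℕ) (u v : List ℕ) :
    σw^[k] (u ++ v) = σw^[k] u ++ σw^[k] v := by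
  induction k generalizing u v with
  | zero => simp
  | succ n ih => simp [Function.iterate_succ_apply, σw_append, ih]

lemma Aw_succ (k : ℕ) : Aw (k + 1) = Aw k ++ Bw k := by
  show σw^[k+1] [0] = _
  rw [Function.iterate_succ_apply]
  have : σw [0] = [0] ++ [1] := rfl
  rw [this, σw_iter_append]; rfl

lemma Bw_succ (k : ℕ) : Bw (k + 1) = Aw k ++ Cw k := by
  show σw^[k+1] [1] = _
  rw [Function.iterate_succ_apply]
  have : σw [1] = [0] ++ [2] := rfl
  rw [this, σw_iter_append]; rfl

lemma Cw_succ (k : ℕ) : Cw (k + 1) = Aw k := by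
  show σw^[k+1] [2] = _
  rw [Function.iterate_succ_apply]
  rfl

lemma len_ABC (k : ℕ) : (Aw k).length = T (k + 2) ∧ (Bw k).length = T (k + 1) + T k ∧
    (Cw k).length = T (k + 1) := by
  induction k with
  | zero => refine ⟨rfl, rfl, rfl⟩
  | succ n ih =>
    obtain ⟨ha, hb, hc⟩ := ih
    refine ⟨?_, ?_, ?_⟩
    · rw [Aw_succ]; simp only [List.length_append, ha, hb]
      show T (n+2) + (T (n+1) + T n) = T (n + 3); simp [T]; ring
    · rw [Bw_succ]; simp only [List.length_append, ha, hc]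
    · rw [Cw_succ, ha]

lemma len_Aw (k : ℕ) : (Aw k).length = T (k + 2) := (len_ABC k).1

lemma valT_nil : valT [] = 0 := rfl

lemma valT_cons (d : ℕ) (u : List ℕ) : valT (d :: u) = d * T (u.length + 2) + valT u := by
  unfold valT
  simp only [List.length_cons]
  rw [Finset.sum_range_succ']
  simp only [List.getD_cons_succ, List.getD_cons_zero, Nat.succ_sub_succ]
  ring_nf
  simp

lemma infix_cons_of {l u : List ℕ} {a : ℕ} (h : l <:+: u) : l <:+: a :: u := by
  obtain ⟨s, t, h⟩ := h
  exact ⟨a :: s, t, by simp [← h]⟩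

lemma T_eq (n : ℕ) : T (n + 3) = T (n + 2) + T (n + 1) + T n := by simp [T]

lemma T_eq' (n : ℕ) : T (n + 1 + 2) = T (n + 2) + T (n + 1) + T n := by
  rw [show n + 1 + 2 = n + 3 by omega]; exact T_eq n

lemma T_eq'' (n : ℕ) : T (n + 1 + 1 + 2) = T (n + 1 + 2) + T (n + 2) + T (n + 1) := by
  rw [show n + 1 + 1 + 2 = n + 1 + 3 by omega]
  have := T_eq (n + 1)
  rwa [show n + 1 + 3 = n + 1 + 1 + 2 by omega, show n + 1 + 1 = n + 2 by omega,
    show n + 1 + 2 = n + 1 + 2 from rfl] at this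

lemma T_eq''' (n : ℕ) : T (n + 1 + 1 + 1 + 2) = T (n + 1 + 1 + 2) + T (n + 1 + 2) + T (n + 2) := by
  have := T_eq (n + 2)
  rwa [show n + 2 + 3 = n + 1 + 1 + 1 + 2 by omega, show n + 2 + 2 = n + 1 + 1 + 2 by omega,
    show n + 2 + 1 = n + 1 + 2 by omega] at this

lemma valT_lt : ∀ (fuel : ℕ) (w : List ℕ), w.length ≤ fuel → (∀ d ∈ w, d ≤ 1) →
    ¬ ([1, 1, 1] <:+: w) → valT w < T (w.length + 2) := by
  intro fuel
  induction fuel with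
  | zero =>
    intro w hw _ _
    have : w = [] := List.length_eq_zero_iff.mp (Nat.le_zero.mp hw)
    subst this
    simp [valT_nil, T]
  | succ n ih =>
    rintro (_ | ⟨d, u⟩) hw hd h3
    · simp [valT_nil, T]
    · have hd1 : d ≤ 1 := hd d (by simp)
      have : d = 0 ∨ d = 1 := by omega
      rcases this with rfl | rfl
      · have hlt := ih u (by simpa using hw) (fun x hx => hd x (by simp [hx]))
          (fun h => h3 (infix_cons_of h))
        rw [valT_cons]
        simp only [List.length_cons]
        have := T_eq' u.length
        omega
      · rcases u with _ | ⟨d2, u⟩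
        · simp [valT_cons, valT_nil, T]
        · have hd2 : d2 ≤ 1 := hd d2 (by simp)
          have : d2 = 0 ∨ d2 = 1 := by omega
          rcases this with rfl | rfl
          · have hlt := ih u (by simp at hw ⊢; omega)
              (fun x hx => hd x (by simp [hx]))
              (fun h => h3 (infix_cons_of (infix_cons_of h)))
            rw [valT_cons, valT_cons]
            simp only [List.length_cons]
            have h1 := T_eq' u.length
            have h2 := T_eq'' u.length
            omega
          · rcases u with _ | ⟨d3, u⟩
            · simp [valT_cons, valT_nil, T]
            · have hd3 : d3 ≤ 1 := hd d3 (by simp)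
              have : d3 = 0 ∨ d3 = 1 := by omega
              rcases this with rfl | rfl
              · have hlt := ih u (by simp at hw ⊢; omega)
                  (fun x hx => hd x (by simp [hx]))
                  (fun h => h3 (infix_cons_of (infix_cons_of (infix_cons_of h))))
                rw [valT_cons, valT_cons, valT_cons]
                simp only [List.length_cons]
                have h1 := T_eq' u.length
                have h2 := T_eq'' u.length
                have h4 := T_eq''' u.length
                omega
              · exact absurd ⟨[], u, rfl⟩ h3

def target (w : List ℕ) : ℕ :=
  if [1, 1] <:+ w then 2 else if w.getLast? = some 1 then 1 else 0

lemma target_cons {u : List ℕ} (x : ℕ) (hu : 2 ≤ u.length) : target (x :: u) = target u := by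
  rcases u with _ | ⟨a, _ | ⟨b, v⟩⟩
  · simp at hu
  · simp at hu
  · have h1 : ([1, 1] <:+ (x :: a :: b :: v)) ↔ ([1, 1] <:+ (a :: b :: v)) := by
      rw [List.suffix_cons_iff]
      constructor
      · rintro (h | h)
        · exfalso; have := congrArg List.length h; simp at this
        · exact h
      · exact Or.inr
    have h2 : (x :: a :: b :: v).getLast? = (a :: b :: v).getLast? := List.getLast?_cons_cons ..
    simp only [target, h1, h2]

lemma target_zero_cons (u : List ℕ) : target (0 :: u) = target u := by
  rcases u with _ | ⟨a, _ | ⟨b, v⟩⟩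
  · decide
  · have h1 : ¬ ([1, 1] <:+ ([0, a] : List ℕ)) := by
      rw [List.suffix_cons_iff]
      rintro (h | h)
      · simp at h
      · rw [List.suffix_cons_iff] at h
        rcases h with h | h
        · have := congrArg List.length h; simp at this
        · simp at h
    have h2 : ¬ ([1, 1] <:+ ([a] : List ℕ)) := by
      rw [List.suffix_cons_iff]
      rintro (h | h)
      · have := congrArg List.length h; simp at this
      · simp at h
    simp only [target, h1, h2, if_false]
    rfl
  · exact target_cons 0 (by simp)

lemma target_10 (u : List ℕ) : target (1 :: 0 :: u) = target u := by
  rcases u with _ | ⟨a, v⟩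
  · decide
  · rw [target_cons 1 (by simp), target_zero_cons]

lemma target_110 (u : List ℕ) : target (1 :: 1 :: 0 :: u) = target u := by
  rw [target_cons 1 (by simp), target_10]

lemma main_aux : ∀ (fuel : ℕ) (w : List ℕ), w.length ≤ fuel → (∀ d ∈ w, d ≤ 1) →
    ¬ ([1, 1, 1] <:+: w) → (Aw w.length).getD (valT w) 0 = target w := by
  intro fuel
  induction fuel with
  | zero =>
    intro w hw _ _
    have : w = [] := List.length_eq_zero_iff.mp (Nat.le_zero.mp hw)
    subst this
    decide
  | succ n ih =>
    rintro (_ | ⟨d, u⟩) hw hd h3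
    · decide
    · have hd1 : d ≤ 1 := hd d (by simp)
      have : d = 0 ∨ d = 1 := by omega
      rcases this with rfl | rfl
      · -- w = 0 :: u
        have hdu : ∀ x ∈ u, x ≤ 1 := fun x hx => hd x (by simp [hx])
        have h3u : ¬ ([1,1,1] <:+: u) := fun h => h3 (infix_cons_of h)
        have hlt := valT_lt n u (by simpa using hw) hdu h3u
        rw [valT_cons]
        simp only [List.length_cons, zero_mul, zero_add]
        rw [Aw_succ, List.getD_append _ _ _ _ (by rw [len_Aw]; exact hlt),
          ih u (by simpa using hw) hdu h3u, target_zero_cons]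
      · rcases u with _ | ⟨d2, u⟩
        · decide
        · have hd2 : d2 ≤ 1 := hd d2 (by simp)
          have : d2 = 0 ∨ d2 = 1 := by omega
          rcases this with rfl | rfl
          · -- w = 1 :: 0 :: u
            have hdu : ∀ x ∈ u, x ≤ 1 := fun x hx => hd x (by simp [hx])
            have h3u : ¬ ([1,1,1] <:+: u) := fun h => h3 (infix_cons_of (infix_cons_of h))
            have hun : u.length ≤ n := by simp at hw; omega
            have hlt := valT_lt n u hun hdu h3u
            rw [valT_cons, valT_cons]
            simp only [List.length_cons, zero_mul, zero_add, one_mul]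
            rw [Aw_succ, List.getD_append_right _ _ _ _ (by rw [len_Aw]; omega), len_Aw]
            rw [show T (u.length + 1 + 2) + valT u - T (u.length + 1 + 2) = valT u by omega]
            rw [Bw_succ, List.getD_append _ _ _ _ (by rw [len_Aw]; exact hlt),
              ih u hun hdu h3u, target_10]
          · rcases u with _ | ⟨d3, u⟩
            · decide
            · have hd3 : d3 ≤ 1 := hd d3 (by simp)
              have : d3 = 0 ∨ d3 = 1 := by omega
              rcases this with rfl | rfl
              · -- w = 1 :: 1 :: 0 :: u
                have hdu : ∀ x ∈ u, x ≤ 1 := fun x hx => hd x (by simp [hx])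
                have h3u : ¬ ([1,1,1] <:+: u) := fun h =>
                  h3 (infix_cons_of (infix_cons_of (infix_cons_of h)))
                have hun : u.length ≤ n := by simp at hw; omega
                have hlt := valT_lt n u hun hdu h3u
                rw [valT_cons, valT_cons, valT_cons]
                simp only [List.length_cons, zero_mul, zero_add, one_mul]
                have ebr : T (u.length + 2 + 2) = T (u.length + 1 + 1 + 2) := rfl
                rw [Aw_succ, List.getD_append_right _ _ _ _ (by rw [len_Aw]; omega), len_Aw]
                rw [show T (u.length + 1 + 1 + 2) + (T (u.length + 1 + 2) + valT u)
                    - T (u.length + 2 + 2) = T (u.length + 1 + 2) + valT u by omega]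
                rw [Bw_succ, List.getD_append_right _ _ _ _ (by rw [len_Aw]; omega), len_Aw]
                rw [show T (u.length + 1 + 2) + valT u - T (u.length + 1 + 2) = valT u by omega]
                rw [Cw_succ, ih u hun hdu h3u, target_110]
              · exact absurd ⟨[], u, rfl⟩ h3

lemma Aw_prefix_succ (k : ℕ) : Aw k <+: Aw (k + 1) := ⟨Bw k, (Aw_succ k).symm⟩

lemma Aw_prefix {j k : ℕ} (h : j ≤ k) : Aw j <+: Aw k := by
  induction h with
  | refl => exact List.prefix_rfl
  | step h ih => exact ih.trans (Aw_prefix_succ _)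

lemma getD_eq_of_prefix {u v : List ℕ} (h : u <+: v) {n : ℕ} (hn : n < u.length) :
    v.getD n 0 = u.getD n 0 := by
  obtain ⟨t, rfl⟩ := h
  exact List.getD_append _ _ _ _ hn

lemma T_lb : ∀ k : ℕ, k + 1 ≤ T (k + 2) := by
  intro k
  induction k using Nat.strong_induction_on with
  | _ k ih =>
    rcases k with _ | _ | m
    · decide
    · decide
    · have h1 : m + 2 ≤ T (m + 1 + 2) := ih (m + 1) (by omega)
      have h2 : m + 1 ≤ T (m + 2) := ih m (by omega)
      have h3 := T_eq'' m
      rw [show m + 2 + 2 = m + 1 + 1 + 2 by omega]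
      omega

lemma TR_eq_target (w : List ℕ) (hd : ∀ d ∈ w, d ≤ 1) (h3 : ¬ ([1, 1, 1] <:+: w)) :
    TR (valT w) = target w := by
  have hb : valT w < T (w.length + 2) := valT_lt w.length w le_rfl hd h3
  have hm := main_aux w.length w le_rfl hd h3
  show (Aw (valT w + 1)).getD (valT w) 0 = target w
  rcases le_total w.length (valT w + 1) with h | h
  · rw [getD_eq_of_prefix (Aw_prefix h) (by rw [len_Aw]; exact hb)]
    exact hm
  · have h2 : valT w < (Aw (valT w + 1)).length := by
      rw [len_Aw]; have := T_lb (valT w + 1); omega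
    rw [← getD_eq_of_prefix (Aw_prefix h) h2]
    exact hm

/-- TR[n] is determined by the ending of the Tribonacci representation of n:
it is 0 if the representation ends in 0, 1 if it ends in 01 (equivalently, ends
in 1 but not 11, allowing padding by leading zeros), and 2 if it ends in 11. -/
theorem TR_from_last_digits (n : ℕ) (w : List ℕ) (hw : GoodRep w) (hv : valT w = n) :
    (w.getLast? = some 0 → TR n = 0) ∧
    (w.getLast? = some 1 ∧ ¬ ([1, 1] <:+ w) → TR n = 1) ∧
    ([1, 1] <:+ w → TR n = 2) := by
  unfold GoodRep at hw
  obtain ⟨hh, hd, h3⟩ := hw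
  subst hv
  have ht := TR_eq_target w hd h3
  refine ⟨?_, ?_, ?_⟩
  · intro hlast
    have hns : ¬ ([1, 1] <:+ w) := by
      rintro ⟨t, rfl⟩
      have h1 : (t ++ [1, 1]).getLast? = some 1 := by
        rw [show t ++ [1, 1] = (t ++ [1]) ++ [1] by simp, List.getLast?_concat]
      rw [hlast] at h1
      simp at h1
    have h0 : ¬ (w.getLast? = some 1) := by rw [hlast]; simp
    rw [ht, target, if_neg hns, if_neg h0]
  · rintro ⟨h1, hns⟩
    rw [ht, target, if_neg hns, if_pos h1]
  · intro hs
    rw [ht, target, if_pos hs]
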